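/- Every cycle in the (L−2) × (L−2) grid of cells, when placed in the interior of the L × L grid (surrounded by a border of empty cells of width one on all sides), yields a valid partition of the L × L grid of cells into two connected regions. Hence P_{L−2}(1) ≤ G_L(1)/2, i.e., the number of self-avoiding polygons fitting inside an (L−2) × (L−2) square is at most the number of unordered partitions of the L × L grid into two connected regions. -/

import Mathlib

open Filter Topology

/-- Nearest-neighbour adjacency on the square lattice `ℤ × ℤ`. -/
def latticeGraph : SimpleGraph (ℤ × ℤ) where
  Adj a b := (a.1 = b.1 ∧ (a.2 = b.2 + 1 ∨ b.2 = a.2 + 1)) ∨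
             (a.2 = b.2 ∧ (a.1 = b.1 + 1 ∨ b.1 = a.1 + 1))
  symm := by
    constructor
    intro a b h
    rcases h with ⟨h1, h2⟩ | ⟨h1, h2⟩
    · exact Or.inl ⟨h1.symm, h2.symm⟩
    · exact Or.inr ⟨h1.symm, h2.symm⟩
  loopless := by
    constructor
    intro a h
    rcases h with ⟨-, h | h⟩ | ⟨-, h | h⟩ <;> omega

/-- The cells of an `L × L` grid, identified with their lower-left corners. -/
def cellBox (L : ℕ) : Set (ℤ × ℤ) := {p | 0 ≤ p.1 ∧ p.1 < L ∧ 0 ≤ p.2 ∧ p.2 < L}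

/-- A set of cells is connected under edge-adjacency. -/
def regionConnected (A : Set (ℤ × ℤ)) : Prop := (latticeGraph.induce A).Connected
/-- Ordered partitions of the `L × L` grid of cells into two nonempty connected regions. -/
noncomputable def numOrderedPartitions (L : ℕ) : ℕ :=
  Nat.card {p : Set (ℤ × ℤ) × Set (ℤ × ℤ) //
    p.1.Nonempty ∧ p.2.Nonempty ∧ regionConnected p.1 ∧ regionConnected p.2 ∧
    Disjoint p.1 p.2 ∧ p.1 ∪ p.2 = cellBox L}
/-- The vertices `{0,…,L} × {0,…,L}` of the `L × L` grid graph. -/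
def vtxBox (L : ℕ) : Set (ℤ × ℤ) := {p | 0 ≤ p.1 ∧ p.1 ≤ L ∧ 0 ≤ p.2 ∧ p.2 ≤ L}

/-- The `L × L` grid graph on vertex set `{0,…,L}²`, with unit-distance edges. -/
def boxGraph (L : ℕ) : SimpleGraph (ℤ × ℤ) where
  Adj a b := latticeGraph.Adj a b ∧ a ∈ vtxBox L ∧ b ∈ vtxBox L
  symm := by
    constructor
    rintro a b ⟨h1, h2, h3⟩
    exact ⟨latticeGraph.adj_symm h1, h3, h2⟩
  loopless := by
    constructor
    rintro a ⟨h, -, -⟩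
    exact latticeGraph.irrefl h
/-- Number of cycles (self-avoiding polygons) in the `L × L` grid graph,
counted as edge sets. -/
noncomputable def numCycles (L : ℕ) : ℕ :=
  Nat.card {s : Set (Sym2 (ℤ × ℤ)) //
    ∃ (v : ℤ × ℤ) (w : (boxGraph L).Walk v v), w.IsCycle ∧ {e | e ∈ w.edges} = s}

/-!
Shifted by `(1, 1)`, a cycle in the grid graph on `{0, …, L-2}²` lies strictly inside the `L × L`
box of cells. Colour each cell by the parity of the number of cycle edges met by the horizontal ray
running left from its centre. Since every vertex has even degree in the cycle, the parity changes
exactly across cycle edges, so the cycle can be read off from the set of odd cells.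

Both colour classes are connected. Walking along the cycle, the cells on its left at two
consecutive steps are joined around the common vertex without crossing the cycle, so all the cells
along one side of the cycle are connected, and the two sides have different colours. Every other
cell moves straight up without changing colour until it meets the cycle or the top row; the top row
is even and joins the cycle just above its highest horizontal edge. Each cycle thus gives the two
ordered partitions (odd, even) and (even, odd), all distinct because the corner cell is even.
-/

namespace GridPolygon

open SimpleGraph

def dir : Fin 4 → ℤ × ℤ := ![(1, 0), (0, 1), (-1, 0), (0, -1)]

/-- The cell at `v` lying between the directions `k` and `k + 1`. -/
def cornerCell (v : ℤ × ℤ) (k : Fin 4) : ℤ × ℤ := v + ![(0, 0), (-1, 0), (-1, -1), (0, -1)] k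

def edgeAt (v : ℤ × ℤ) (k : Fin 4) : Sym2 (ℤ × ℤ) := s(v, v + dir k)

/-- The cell on the left of the unit step `u → v`: its lower-left corner is
`(u + v + J (v - u) - (1, 1)) / 2`, where `J` is the quarter turn. -/
def leftCell (u v : ℤ × ℤ) : ℤ × ℤ :=
  ((u.1 + v.1 - (v.2 - u.2) - 1) / 2, (u.2 + v.2 + (v.1 - u.1) - 1) / 2)

def innerVtx (L : ℕ) : Set (ℤ × ℤ) := {p | 1 ≤ p.1 ∧ p.1 < L ∧ 1 ≤ p.2 ∧ p.2 < L}

theorem latticeGraph_adj_iff {u v : ℤ × ℤ} : latticeGraph.Adj v u ↔ ∃ k, u = v + dir k := by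
  obtain ⟨a, b⟩ := v
  obtain ⟨c, d⟩ := u
  constructor
  · rintro (⟨h, h' | h'⟩ | ⟨h, h' | h'⟩)
    · exact ⟨3, by simp_all [dir]⟩
    · exact ⟨1, by simp_all [dir]⟩
    · exact ⟨2, by simp_all [dir]⟩
    · exact ⟨0, by simp_all [dir]⟩
  · rintro ⟨k, hk⟩
    fin_cases k <;> simp_all [latticeGraph, dir]

theorem leftCell_add_dir_left (v : ℤ × ℤ) (i : Fin 4) :
    leftCell (v + dir i) v = cornerCell v (i - 1) := by
  fin_cases i <;> ext <;> simp [leftCell, cornerCell, dir] <;> omega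

theorem leftCell_add_dir_right (v : ℤ × ℤ) (j : Fin 4) :
    leftCell v (v + dir j) = cornerCell v j := by
  fin_cases j <;> ext <;> simp [leftCell, cornerCell, dir] <;> omega

theorem cornerCell_adj_succ (v : ℤ × ℤ) (k : Fin 4) :
    latticeGraph.Adj (cornerCell v k) (cornerCell v (k + 1)) := by
  fin_cases k <;> simp [latticeGraph, cornerCell]

theorem cornerCell_mem_cellBox {L : ℕ} {v : ℤ × ℤ} (hv : v ∈ innerVtx L) (k : Fin 4) :
    cornerCell v k ∈ cellBox L := by
  obtain ⟨h1, h2, h3, h4⟩ := hv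
  fin_cases k <;> simp [cellBox, cornerCell] <;> omega

theorem dir_injective : Function.Injective dir := by decide

noncomputable def degree (F : Set (Sym2 (ℤ × ℤ))) (v : ℤ × ℤ) : ℕ :=
  {k : Fin 4 | edgeAt v k ∈ F}.ncard

theorem sum_indicator_edgeAt_eq_degree (F : Set (Sym2 (ℤ × ℤ))) (v : ℤ × ℤ) :
    ∑ k, F.indicator 1 (edgeAt v k) = (degree F v : ZMod 2) := by
  classical
  simp [Set.indicator_apply, Finset.sum_boole, degree, Set.ncard_eq_toFinset_card']

theorem edgeAt_notMem_of_degree_le_two {F : Set (Sym2 (ℤ × ℤ))} {v : ℤ × ℤ}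
    (hdeg : degree F v ≤ 2) {i j k : Fin 4} (hij : i ≠ j) (hki : k ≠ i) (hkj : k ≠ j)
    (hi : edgeAt v i ∈ F) (hj : edgeAt v j ∈ F) : edgeAt v k ∉ F := by
  intro hk
  have : ({i, j, k} : Set (Fin 4)).ncard ≤ degree F v :=
    Set.ncard_le_ncard (by simp [Set.insert_subset_iff, hi, hj, hk]) (Set.toFinite _)
  rw [Set.ncard_eq_three.mpr ⟨i, j, k, hij, hki.symm, hkj.symm, rfl⟩] at this
  omega

variable {L : ℕ} {F : Set (Sym2 (ℤ × ℤ))}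

/-- The parity of the number of vertical edges of `F` met by the horizontal ray running left
from the centre of the cell `p`, stopped at the line `x = 1`. -/
noncomputable def crossingParity (F : Set (Sym2 (ℤ × ℤ))) (p : ℤ × ℤ) : ZMod 2 :=
  ∑ i ∈ Finset.range p.1.toNat, F.indicator 1 (edgeAt ((i : ℤ) + 1, p.2) 1)

theorem crossingParity_eq_zero_of_nonpos {x : ℤ} (hx : x ≤ 0) (y : ℤ) :
    crossingParity F (x, y) = 0 := by
  simp [crossingParity, Int.toNat_eq_zero.mpr hx]

theorem crossingParity_add_one_fst {x : ℤ} (hx : 0 ≤ x) (y : ℤ) :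
    crossingParity F (x + 1, y) =
      crossingParity F (x, y) + F.indicator 1 (edgeAt (x + 1, y) 1) := by
  simp [crossingParity, Int.toNat_add hx zero_le_one, Finset.sum_range_succ, Int.toNat_of_nonneg hx]

theorem crossingParity_add_one_snd (heven : ∀ v, ∑ k, F.indicator 1 (edgeAt v k) = (0 : ZMod 2))
    (hleft : ∀ y, edgeAt (0, y) 0 ∉ F) {x : ℤ} (hx : 0 ≤ x) (y : ℤ) :
    crossingParity F (x, y + 1) =
      crossingParity F (x, y) + F.indicator 1 (edgeAt (x, y + 1) 0) := by
  -- add up the (even) degrees of the vertices `(i + 1, y + 1)` with `i < x`: the vertical edges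
  -- there make up both parities, while the horizontal ones telescope
  set g : ℕ → ZMod 2 := fun i => F.indicator 1 (edgeAt ((i : ℤ), y + 1) 0)
  have hvertex (i : ℕ) : F.indicator 1 (edgeAt ((i : ℤ) + 1, y + 1) 1) +
      F.indicator 1 (edgeAt ((i : ℤ) + 1, y) 1) = g (i + 1) - g i := by
    have h := heven ((i : ℤ) + 1, y + 1)
    have h2 : edgeAt ((i : ℤ) + 1, y + 1) 2 = edgeAt ((i : ℤ), y + 1) 0 := by
      simp [edgeAt, dir, Sym2.eq_swap]
    have h3 : edgeAt ((i : ℤ) + 1, y + 1) 3 = edgeAt ((i : ℤ) + 1, y) 1 := by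
      simp [edgeAt, dir, Sym2.eq_swap]
    rw [Fin.sum_univ_four, h2, h3] at h
    simp only [g, CharTwo.sub_eq_add, Nat.cast_add, Nat.cast_one]
    linear_combination (norm := ring_nf) h
    reduce_mod_char
  have hg0 : g 0 = 0 := Set.indicator_of_notMem (hleft _) _
  obtain ⟨n, rfl⟩ := Int.eq_ofNat_of_zero_le hx
  have hsum : crossingParity F (n, y + 1) + crossingParity F (n, y) = g n := by
    simp only [crossingParity, Int.toNat_natCast, ← Finset.sum_add_distrib, hvertex,
      Finset.sum_range_sub, hg0, sub_zero]
  simp only [g] at hsum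
  linear_combination (norm := ring_nf) hsum
  reduce_mod_char

def parityGraph (L : ℕ) (F : Set (Sym2 (ℤ × ℤ))) : SimpleGraph (ℤ × ℤ) where
  Adj c c' := latticeGraph.Adj c c' ∧ c ∈ cellBox L ∧ c' ∈ cellBox L ∧
    crossingParity F c = crossingParity F c'
  symm := ⟨fun _ _ h => ⟨h.1.symm, h.2.2.1, h.2.1, h.2.2.2.symm⟩⟩
  loopless := ⟨fun _ h => h.1.ne rfl⟩

theorem parityGraph_adj {c c' : ℤ × ℤ} : (parityGraph L F).Adj c c' ↔
    latticeGraph.Adj c c' ∧ c ∈ cellBox L ∧ c' ∈ cellBox L ∧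
      crossingParity F c = crossingParity F c' :=
  Iff.rfl

theorem crossingParity_eq_of_reachable {c c' : ℤ × ℤ} (h : (parityGraph L F).Reachable c c') :
    crossingParity F c = crossingParity F c' := by
  obtain ⟨p⟩ := h
  induction p with
  | nil => rfl
  | cons hadj _ ih => exact (parityGraph_adj.mp hadj).2.2.2.trans ih

def parityRegion (L : ℕ) (F : Set (Sym2 (ℤ × ℤ))) (k : ZMod 2) : Set (ℤ × ℤ) :=
  {c | c ∈ cellBox L ∧ crossingParity F c = k}

theorem cellBox_diff_parityRegion_one :
    cellBox L \ parityRegion L F 1 = parityRegion L F 0 := by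
  have hcases : ∀ a : ZMod 2, a ≠ 1 ↔ a = 0 := by decide
  ext c
  simp [parityRegion, hcases]

theorem exists_reachable_induce_parityRegion {k : ZMod 2} {c c' : ℤ × ℤ}
    (h : (parityGraph L F).Reachable c c') (hc : c ∈ parityRegion L F k) :
    ∃ hc' : c' ∈ parityRegion L F k,
      (latticeGraph.induce (parityRegion L F k)).Reachable ⟨c, hc⟩ ⟨c', hc'⟩ := by
  obtain ⟨p⟩ := h
  induction p with
  | nil => exact ⟨hc, .rfl⟩
  | cons hadj _ ih =>
    obtain ⟨hlat, -, hbox, hpar⟩ := parityGraph_adj.mp hadj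
    obtain ⟨hc', hreach⟩ := ih ⟨hbox, hpar ▸ hc.2⟩
    have hadj' : (latticeGraph.induce (parityRegion L F k)).Adj ⟨_, hc⟩ ⟨_, ⟨hbox, hpar ▸ hc.2⟩⟩ :=
      hlat
    exact ⟨hc', hadj'.reachable.trans hreach⟩

theorem regionConnected_parityRegion {k : ZMod 2} (hne : (parityRegion L F k).Nonempty)
    (h : ∀ c ∈ parityRegion L F k, ∀ c' ∈ parityRegion L F k, (parityGraph L F).Reachable c c') :
    regionConnected (parityRegion L F k) := by
  rw [regionConnected, connected_iff]
  refine ⟨fun ⟨c, hc⟩ ⟨c', hc'⟩ => ?_, hne.to_subtype⟩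
  exact (exists_reachable_induce_parityRegion (h c hc c' hc') hc).2

structure IsInnerTwoRegular (L : ℕ) (F : Set (Sym2 (ℤ × ℤ))) : Prop where
  subset_edgeSet : F ⊆ latticeGraph.edgeSet
  mem_innerVtx : ∀ e ∈ F, ∀ v ∈ e, v ∈ innerVtx L
  degree_eq : ∀ v, degree F v = 0 ∨ degree F v = 2

namespace IsInnerTwoRegular

variable (hF : IsInnerTwoRegular L F)
include hF

theorem sum_indicator_edgeAt_eq_zero (v : ℤ × ℤ) :
    ∑ k, F.indicator 1 (edgeAt v k) = (0 : ZMod 2) := by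
  rw [sum_indicator_edgeAt_eq_degree]
  rcases hF.degree_eq v with h | h <;> rw [h] <;> rfl

theorem edgeAt_notMem {v : ℤ × ℤ} {i j k : Fin 4} (hij : i ≠ j) (hki : k ≠ i) (hkj : k ≠ j)
    (hi : edgeAt v i ∈ F) (hj : edgeAt v j ∈ F) : edgeAt v k ∉ F :=
  edgeAt_notMem_of_degree_le_two (by rcases hF.degree_eq v with h | h <;> omega) hij hki hkj hi hj

theorem edgeAt_notMem_of_notMem_innerVtx {v : ℤ × ℤ} (hv : v ∉ innerVtx L) (k : Fin 4) :
    edgeAt v k ∉ F :=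
  fun h => hv (hF.mem_innerVtx _ h v (Sym2.mem_mk_left _ _))

theorem edgeAt_notMem_of_add_notMem_innerVtx {v : ℤ × ℤ} {k : Fin 4}
    (hv : v + dir k ∉ innerVtx L) : edgeAt v k ∉ F :=
  fun h => hv (hF.mem_innerVtx _ h _ (Sym2.mem_mk_right _ _))

theorem crossingParity_add_one_snd {x : ℤ} (hx : 0 ≤ x) (y : ℤ) :
    crossingParity F (x, y + 1) =
      crossingParity F (x, y) + F.indicator 1 (edgeAt (x, y + 1) 0) :=
  GridPolygon.crossingParity_add_one_snd hF.sum_indicator_edgeAt_eq_zero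
    (fun _ => hF.edgeAt_notMem_of_notMem_innerVtx (by simp [innerVtx]) 0) hx y

theorem crossingParity_cornerCell_add_succ {v : ℤ × ℤ} (hv : 1 ≤ v.1) (k : Fin 4) :
    crossingParity F (cornerCell v k) + crossingParity F (cornerCell v (k + 1)) =
      F.indicator 1 (edgeAt v (k + 1)) := by
  obtain ⟨a, b⟩ := v
  have hfst (y : ℤ) : crossingParity F (a, y) =
      crossingParity F (a - 1, y) + F.indicator 1 s((a, y), (a, y + 1)) := by
    simpa [edgeAt, dir] using crossingParity_add_one_fst (F := F) (x := a - 1) (by omega) y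
  have hsnd (x : ℤ) (hx : 0 ≤ x) : crossingParity F (x, b) =
      crossingParity F (x, b - 1) + F.indicator 1 s((x, b), (x + 1, b)) := by
    simpa [edgeAt, dir] using hF.crossingParity_add_one_snd hx (b - 1)
  fin_cases k <;> simp [cornerCell, edgeAt, dir, ← sub_eq_add_neg]
  · rw [hfst b, add_comm, CharTwo.add_cancel_left]
  · rw [hsnd (a - 1) (by omega), add_right_comm, CharTwo.add_self_eq_zero, zero_add,
      sub_add_cancel, Sym2.eq_swap]
  · rw [hfst (b - 1), CharTwo.add_cancel_left, sub_add_cancel, Sym2.eq_swap]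
  · rw [hsnd a (by omega), CharTwo.add_cancel_left]

theorem crossingParity_cornerCell_eq_iff {v : ℤ × ℤ} (hv : 1 ≤ v.1) (k : Fin 4) :
    crossingParity F (cornerCell v k) = crossingParity F (cornerCell v (k + 1)) ↔
      edgeAt v (k + 1) ∉ F := by
  rw [← CharTwo.add_eq_zero, hF.crossingParity_cornerCell_add_succ hv]
  simp

theorem parityGraph_adj_cornerCell {v : ℤ × ℤ} (hv : v ∈ innerVtx L) {k : Fin 4}
    (hk : edgeAt v (k + 1) ∉ F) : (parityGraph L F).Adj (cornerCell v k) (cornerCell v (k + 1)) :=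
  parityGraph_adj.mpr ⟨cornerCell_adj_succ v k, cornerCell_mem_cellBox hv k,
    cornerCell_mem_cellBox hv (k + 1), (hF.crossingParity_cornerCell_eq_iff hv.1 k).mpr hk⟩

open Fin.NatCast in
theorem reachable_cornerCell_sub_one {v : ℤ × ℤ} (hv : v ∈ innerVtx L) {i j : Fin 4}
    (hij : i ≠ j) (hi : edgeAt v i ∈ F) (hj : edgeAt v j ∈ F) :
    (parityGraph L F).Reachable (cornerCell v (i - 1)) (cornerCell v j) := by
  -- turning at `v`, the left side sweeps clockwise from cell `i - 1` to cell `j`, crossing only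
  -- edges other than `i` and `j`
  have hsweep (n : ℕ) (hn : ∀ m : ℕ, 1 ≤ m → m ≤ n → edgeAt v (j + (m : Fin 4)) ∉ F) :
      (parityGraph L F).Reachable (cornerCell v (j + (n : Fin 4))) (cornerCell v j) := by
    induction n with
    | zero => simp
    | succ n ih =>
      refine .trans ?_ (ih fun m h1 h2 => hn m h1 (by omega))
      have hadj := hF.parityGraph_adj_cornerCell hv (k := j + (n : Fin 4)) (by
        simpa [add_assoc] using hn (n + 1) (by omega) le_rfl)
      simpa [add_assoc] using hadj.symm.reachable
  have hfin : ∀ i j : Fin 4, i ≠ j → ∀ m : ℕ, 1 ≤ m → m ≤ (i - 1 - j).val →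
      j + (m : Fin 4) ≠ i ∧ j + (m : Fin 4) ≠ j := by decide
  have := hsweep (i - 1 - j).val fun m h1 h2 =>
    hF.edgeAt_notMem hij (hfin i j hij m h1 h2).1 (hfin i j hij m h1 h2).2 hi hj
  simpa using this

theorem crossingParity_leftCell_ne {u v : ℤ × ℤ} (he : s(u, v) ∈ F) :
    crossingParity F (leftCell u v) ≠ crossingParity F (leftCell v u) := by
  have hadj : latticeGraph.Adj v u := (hF.subset_edgeSet he : latticeGraph.Adj u v).symm
  obtain ⟨i, rfl⟩ := latticeGraph_adj_iff.mp hadj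
  have hv := hF.mem_innerVtx _ he v (Sym2.mem_mk_right _ _)
  have := hF.crossingParity_cornerCell_eq_iff hv.1 (i - 1)
  rw [sub_add_cancel] at this
  rw [leftCell_add_dir_left, leftCell_add_dir_right, Ne, this, not_not, edgeAt, Sym2.eq_swap]
  exact he

theorem crossingParity_eq_zero_of_le {x y : ℤ} (hy : (L : ℤ) - 1 ≤ y) :
    crossingParity F (x, y) = 0 :=
  Finset.sum_eq_zero fun _ _ => Set.indicator_of_notMem
    (hF.edgeAt_notMem_of_add_notMem_innerVtx (by simp [innerVtx, dir]; omega)) _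

theorem reachable_top_or_below_edge {x y : ℤ} (hc : (x, y) ∈ cellBox L) :
    (parityGraph L F).Reachable (x, y) (x, L - 1) ∨
      ∃ y', (parityGraph L F).Reachable (x, y) (x, y') ∧ y ≤ y' ∧ edgeAt (x, y' + 1) 0 ∈ F := by
  obtain ⟨hx0, hxL, hy0, hyL⟩ : 0 ≤ x ∧ x < L ∧ 0 ≤ y ∧ y < L := hc
  induction y, (by omega : y ≤ (L : ℤ) - 1) using Int.leInductionDown with
  | base => exact .inl .rfl
  | pred n hn ih =>
    by_cases he : edgeAt (x, n) 0 ∈ F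
    · exact .inr ⟨n - 1, .rfl, le_rfl, by simpa using he⟩
    have hadj : (parityGraph L F).Adj (x, n - 1) (x, n) := by
      refine parityGraph_adj.mpr ⟨by simp [latticeGraph], ⟨hx0, hxL, hy0, by omega⟩,
        ⟨hx0, hxL, by omega, by omega⟩, ?_⟩
      simpa [he] using (hF.crossingParity_add_one_snd hx0 (n - 1)).symm
    rcases ih (by omega) (by omega) with htop | ⟨y', hy', hny', he'⟩
    · exact .inl (hadj.reachable.trans htop)
    · exact .inr ⟨y', hadj.reachable.trans hy', by omega, he'⟩

theorem reachable_top_row {x : ℤ} (hx0 : 0 ≤ x) (hxL : x < L) :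
    (parityGraph L F).Reachable (x, L - 1) (0, L - 1) := by
  induction x, hx0 using Int.leInduction with
  | base => exact .rfl
  | succ n hn ih =>
    refine .trans (Adj.reachable (parityGraph_adj.mpr ⟨by simp [latticeGraph], ?_, ?_, ?_⟩))
      (ih (by omega))
    · exact ⟨by omega, hxL, by omega, by omega⟩
    · exact ⟨hn, by omega, by omega, by omega⟩
    · rw [hF.crossingParity_eq_zero_of_le le_rfl, hF.crossingParity_eq_zero_of_le le_rfl]

theorem leftCell_mem_cellBox {u v : ℤ × ℤ} (he : s(u, v) ∈ F) : leftCell u v ∈ cellBox L := by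
  have hadj : latticeGraph.Adj v u := (hF.subset_edgeSet he : latticeGraph.Adj u v).symm
  obtain ⟨i, rfl⟩ := latticeGraph_adj_iff.mp hadj
  rw [leftCell_add_dir_left]
  exact cornerCell_mem_cellBox (hF.mem_innerVtx _ he v (Sym2.mem_mk_right _ _)) _

theorem reachable_leftCell_of_dartAdj {d d' : latticeGraph.Dart} (hdd' : d.snd = d'.fst)
    (hne : d.edge ≠ d'.edge) (hd : d.edge ∈ F) (hd' : d'.edge ∈ F) :
    (parityGraph L F).Reachable (leftCell d.fst d.snd) (leftCell d'.fst d'.snd) := by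
  obtain ⟨⟨u, v⟩, huv⟩ := d
  obtain ⟨⟨v', t⟩, hvt⟩ := d'
  simp only [Dart.edge_mk] at hdd' hne hd hd' huv hvt ⊢
  subst hdd'
  obtain ⟨i, rfl⟩ := latticeGraph_adj_iff.mp huv.symm
  obtain ⟨j, rfl⟩ := latticeGraph_adj_iff.mp hvt
  have hv : v ∈ innerVtx L := hF.mem_innerVtx _ hd' v (Sym2.mem_mk_left _ _)
  rw [leftCell_add_dir_left, leftCell_add_dir_right]
  refine hF.reachable_cornerCell_sub_one hv ?_ ?_ hd'
  · rintro rfl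
    exact hne Sym2.eq_swap
  · rwa [edgeAt, Sym2.eq_swap]

theorem reachable_leftCell_of_isTrail {u v : ℤ × ℤ} {p : latticeGraph.Walk u v} (hp : p.IsTrail)
    (hpF : ∀ e ∈ p.edges, e ∈ F) {d d' : latticeGraph.Dart} (hd : d ∈ p.darts)
    (hd' : d' ∈ p.darts) :
    (parityGraph L F).Reachable (leftCell d.fst d.snd) (leftCell d'.fst d'.snd) := by
  let R (d d' : latticeGraph.Dart) : Prop :=
    (parityGraph L F).Reachable (leftCell d.fst d.snd) (leftCell d'.fst d'.snd)
  -- consecutive darts of a trail carry distinct edges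
  have hchain : p.darts.IsChain R :=
    p.isChain_dartAdj_darts.imp_of_mem_imp fun d d' hd hd' hadj =>
      hF.reachable_leftCell_of_dartAdj hadj
        (fun h => d'.adj.ne <| by
          rw [List.inj_on_of_nodup_map hp.edges_nodup hd hd' h] at hadj
          exact hadj.symm)
        (hpF _ (List.mem_map_of_mem hd)) (hpF _ (List.mem_map_of_mem hd'))
  have : Trans R R R := ⟨Reachable.trans⟩
  have : Std.Symm R := ⟨fun _ _ => Reachable.symm⟩
  exact hchain.pairwise.forall_of_forall (fun _ _ => .rfl) hd hd'

theorem reachable_top_or_leftCell {c : ℤ × ℤ} (hc : c ∈ cellBox L) :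
    (parityGraph L F).Reachable c (c.1, L - 1) ∨
      ∃ u v, s(u, v) ∈ F ∧ (parityGraph L F).Reachable c (leftCell u v) := by
  obtain ⟨x, y⟩ := c
  rcases hF.reachable_top_or_below_edge hc with h | ⟨y', h, -, he⟩
  · exact .inl h
  · have hcell : leftCell (x + 1, y' + 1) (x, y' + 1) = (x, y') := by
      ext <;> simp [leftCell] <;> omega
    refine .inr ⟨(x + 1, y' + 1), (x, y' + 1), ?_, hcell ▸ h⟩
    simpa [edgeAt, dir, Sym2.eq_swap] using he

theorem subset_of_crossingParity_eq {F' : Set (Sym2 (ℤ × ℤ))} (hF' : IsInnerTwoRegular L F')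
    (h : ∀ c ∈ cellBox L, crossingParity F c = crossingParity F' c) : F ⊆ F' := by
  intro e he
  induction e using Sym2.ind with | h u v =>
  have hadj : latticeGraph.Adj v u := (hF.subset_edgeSet he : latticeGraph.Adj u v).symm
  obtain ⟨i, rfl⟩ := latticeGraph_adj_iff.mp hadj
  have hv := hF.mem_innerVtx _ he v (Sym2.mem_mk_right _ _)
  have hiff := hF.crossingParity_cornerCell_eq_iff hv.1 (i - 1)
  have hiff' := hF'.crossingParity_cornerCell_eq_iff hv.1 (i - 1)
  rw [sub_add_cancel, h _ (cornerCell_mem_cellBox hv _), h _ (cornerCell_mem_cellBox hv _)] at hiff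
  rw [sub_add_cancel, hiff, edgeAt, Sym2.eq_swap] at hiff'
  by_contra hne
  exact hiff'.mpr hne he

theorem eq_of_parityRegion_one_eq {F' : Set (Sym2 (ℤ × ℤ))} (hF' : IsInnerTwoRegular L F')
    (h : parityRegion L F 1 = parityRegion L F' 1) : F = F' := by
  have hpar (c : ℤ × ℤ) (hc : c ∈ cellBox L) : crossingParity F c = crossingParity F' c := by
    have := Set.ext_iff.mp h c
    simp only [parityRegion, Set.mem_ofPred_eq, hc, true_and] at this
    exact (by decide : ∀ a b : ZMod 2, (a = 1 ↔ b = 1) → a = b) _ _ this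
  exact (hF.subset_of_crossingParity_eq hF' hpar).antisymm
    (hF'.subset_of_crossingParity_eq hF fun c hc => (hpar c hc).symm)

end IsInnerTwoRegular

section Cycle

variable {v₀ : ℤ × ℤ} {w : latticeGraph.Walk v₀ v₀}

theorem degree_edges_eq_two (hw : w.IsCycle) {v : ℤ × ℤ} (hv : v ∈ w.support) :
    degree {e | e ∈ w.edges} v = 2 := by
  rw [degree, ← Set.ncard_image_of_injective _ ((add_right_injective v).comp dir_injective),
    ← hw.ncard_neighborSet_toSubgraph_eq_two hv]
  congr 1
  ext u
  simp only [Subgraph.mem_neighborSet, Walk.adj_toSubgraph_iff_mem_edges, Set.mem_image,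
    Set.mem_ofPred_eq, Function.comp_apply, edgeAt]
  constructor
  · rintro ⟨k, hk, rfl⟩
    exact hk
  · intro h
    have hadj : latticeGraph.Adj v u := w.edges_subset_edgeSet h
    obtain ⟨k, rfl⟩ := latticeGraph_adj_iff.mp hadj
    exact ⟨k, h, rfl⟩

theorem degree_edges_eq_zero {v : ℤ × ℤ} (hv : v ∉ w.support) :
    degree {e | e ∈ w.edges} v = 0 := by
  rw [degree, Set.ncard_eq_zero, Set.eq_empty_iff_forall_notMem]
  exact fun k hk => hv (w.fst_mem_support_of_mem_edges hk)

end Cycle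

def IsInnerCycle (L : ℕ) (F : Set (Sym2 (ℤ × ℤ))) : Prop :=
  ∃ (v : ℤ × ℤ) (w : latticeGraph.Walk v v),
    w.IsCycle ∧ (∀ u ∈ w.support, u ∈ innerVtx L) ∧ {e | e ∈ w.edges} = F

namespace IsInnerCycle

variable (hF : IsInnerCycle L F)
include hF

theorem isInnerTwoRegular : IsInnerTwoRegular L F := by
  obtain ⟨v₀, w, hw, hsupp, rfl⟩ := hF
  refine ⟨fun e he => w.edges_subset_edgeSet he,
    fun e he v hv => hsupp v (w.mem_support_of_mem_edges he hv), fun v => ?_⟩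
  by_cases hv : v ∈ w.support
  · exact .inr (degree_edges_eq_two hw hv)
  · exact .inl (degree_edges_eq_zero hv)

theorem exists_mem : ∃ u v, s(u, v) ∈ F := by
  obtain ⟨v₀, w, hw, -, rfl⟩ := hF
  have hlen : 0 < w.darts.length := by
    have := hw.three_le_length
    rw [w.length_darts]
    omega
  obtain ⟨d, hd⟩ := List.exists_mem_of_length_pos hlen
  exact ⟨d.fst, d.snd, show d.edge ∈ w.edges from List.mem_map_of_mem hd⟩

theorem reachable_of_crossingParity_eq {u v u' v' : ℤ × ℤ} (he : s(u, v) ∈ F)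
    (he' : s(u', v') ∈ F)
    (h : crossingParity F (leftCell u v) = crossingParity F (leftCell u' v')) :
    (parityGraph L F).Reachable (leftCell u v) (leftCell u' v') := by
  have hF₂ := hF.isInnerTwoRegular
  obtain ⟨v₀, w, hw, -, rfl⟩ := hF
  obtain ⟨d₀, hd₀, -⟩ := List.mem_map.mp he
  have hrev : ∀ e ∈ w.reverse.edges, e ∈ {e | e ∈ w.edges} := by simp
  -- every oriented edge runs along `w` or along its reverse, so its left cell is on one of
  -- the two sides of `d₀`
  have hside {u v : ℤ × ℤ} (he : s(u, v) ∈ w.edges) :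
      (parityGraph L {e | e ∈ w.edges}).Reachable (leftCell u v) (leftCell d₀.fst d₀.snd) ∨
        (parityGraph L {e | e ∈ w.edges}).Reachable (leftCell u v) (leftCell d₀.snd d₀.fst) := by
    obtain ⟨d, hd, hde⟩ := List.mem_map.mp he
    rcases dart_edge_eq_mk'_iff'.mp hde with ⟨rfl, rfl⟩ | ⟨rfl, rfl⟩
    · exact .inl (hF₂.reachable_leftCell_of_isTrail hw.isTrail (fun _ => id) hd hd₀)
    · refine .inr (hF₂.reachable_leftCell_of_isTrail (hw.isTrail.reverse) hrev
        (d := d.symm) (d' := d₀.symm) ?_ ?_) <;> simpa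
  have hne := hF₂.crossingParity_leftCell_ne (show s(d₀.fst, d₀.snd) ∈ w.edges from
    List.mem_map_of_mem hd₀)
  rcases hside he with h₁ | h₁ <;> rcases hside he' with h₂ | h₂
  · exact h₁.trans h₂.symm
  · refine absurd ?_ hne
    rw [← crossingParity_eq_of_reachable h₁, h, crossingParity_eq_of_reachable h₂]
  · refine absurd ?_ hne
    rw [← crossingParity_eq_of_reachable h₂, ← h, crossingParity_eq_of_reachable h₁]
  · exact h₁.trans h₂.symm

theorem regionConnected_parityRegion_one : regionConnected (parityRegion L F 1) := by
  have hF₂ := hF.isInnerTwoRegular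
  have hside {c : ℤ × ℤ} (hc : c ∈ parityRegion L F 1) :
      ∃ u v, s(u, v) ∈ F ∧ (parityGraph L F).Reachable c (leftCell u v) := by
    refine (hF₂.reachable_top_or_leftCell hc.1).resolve_left fun htop => ?_
    have := (crossingParity_eq_of_reachable htop).symm.trans hc.2
    rw [hF₂.crossingParity_eq_zero_of_le le_rfl] at this
    exact zero_ne_one this
  refine regionConnected_parityRegion ?_ fun c hc c' hc' => ?_
  · obtain ⟨u, v, he⟩ := hF.exists_mem
    have hne := hF₂.crossingParity_leftCell_ne he
    have he' : s(v, u) ∈ F := Sym2.eq_swap ▸ he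
    rcases (by decide : ∀ a b : ZMod 2, a ≠ b → a = 1 ∨ b = 1) _ _ hne with h | h
    · exact ⟨_, hF₂.leftCell_mem_cellBox he, h⟩
    · exact ⟨_, hF₂.leftCell_mem_cellBox he', h⟩
  · obtain ⟨u, v, he, h⟩ := hside hc
    obtain ⟨u', v', he', h'⟩ := hside hc'
    refine h.trans (.trans ?_ h'.symm)
    refine hF.reachable_of_crossingParity_eq he he' ?_
    rw [← crossingParity_eq_of_reachable h, ← crossingParity_eq_of_reachable h', hc.2, hc'.2]

theorem exists_leftCell_reachable_top :
    ∃ u v, s(u, v) ∈ F ∧ (parityGraph L F).Reachable (leftCell u v) (0, L - 1) := by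
  have hF₂ := hF.isInnerTwoRegular
  obtain ⟨v₀, w, hw, hsupp, rfl⟩ := hF
  obtain ⟨t, ht, htop⟩ := w.support.toFinset.exists_max_image Prod.snd ⟨v₀, by simp⟩
  simp only [List.mem_toFinset] at ht htop
  -- no edge lies above the highest vertex `t`
  have hclimb {c : ℤ × ℤ} (hc : c ∈ cellBox L) (hy : t.2 ≤ c.2) :
      (parityGraph L {e | e ∈ w.edges}).Reachable c (0, L - 1) := by
    rcases hF₂.reachable_top_or_below_edge hc with h | ⟨y', -, hyy', he⟩
    · exact h.trans (hF₂.reachable_top_row hc.1 hc.2.1)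
    · have := htop _ (w.fst_mem_support_of_mem_edges he)
      simp only at this
      omega
  obtain ⟨i, j, hij, hdeg⟩ := Set.ncard_eq_two.mp (degree_edges_eq_two hw ht)
  have hmem (k : Fin 4) : edgeAt t k ∈ w.edges ↔ k = i ∨ k = j := by
    simpa using Set.ext_iff.mp hdeg k
  have hup : edgeAt t 1 ∉ w.edges := fun h => by
    have := htop _ (w.snd_mem_support_of_mem_edges h)
    simp [dir] at this
  have hi : i ≠ 1 := by rintro rfl; exact hup ((hmem 1).mpr (.inl rfl))
  have hj : j ≠ 1 := by rintro rfl; exact hup ((hmem 1).mpr (.inr rfl))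
  -- the highest vertex has no edge upwards, so one of its two edges is horizontal
  obtain ⟨k, hk, hk02⟩ := (by decide : ∀ i j : Fin 4, i ≠ j → i ≠ 1 → j ≠ 1 →
    ∃ k, (k = i ∨ k = j) ∧ (k = 0 ∨ k = 2)) i j hij hi hj
  have hkF := (hmem k).mpr hk
  have hbox := cornerCell_mem_cellBox (hsupp t ht)
  rcases hk02 with rfl | rfl
  · refine ⟨t, t + dir 0, hkF, ?_⟩
    rw [leftCell_add_dir_right]
    exact hclimb (hbox 0) (by simp [cornerCell])
  · refine ⟨t + dir 2, t, by rwa [Sym2.eq_swap], ?_⟩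
    rw [leftCell_add_dir_left]
    exact hclimb (hbox _) (by simp [cornerCell])

theorem one_le : 1 ≤ L := by
  obtain ⟨u, v, he⟩ := hF.exists_mem
  obtain ⟨h₁, h₂, -⟩ := hF.isInnerTwoRegular.mem_innerVtx _ he u (Sym2.mem_mk_left _ _)
  omega

theorem regionConnected_parityRegion_zero : regionConnected (parityRegion L F 0) := by
  have hF₂ := hF.isInnerTwoRegular
  obtain ⟨u₀, v₀, he₀, h₀⟩ := hF.exists_leftCell_reachable_top
  have htop : ((0 : ℤ), (L : ℤ) - 1) ∈ parityRegion L F 0 := by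
    have := hF.one_le
    exact ⟨⟨le_rfl, by omega, by omega, by omega⟩, hF₂.crossingParity_eq_zero_of_le le_rfl⟩
  have hreach {c : ℤ × ℤ} (hc : c ∈ parityRegion L F 0) :
      (parityGraph L F).Reachable c (0, L - 1) := by
    rcases hF₂.reachable_top_or_leftCell hc.1 with h | ⟨u, v, he, h⟩
    · exact h.trans (hF₂.reachable_top_row hc.1.1 hc.1.2.1)
    · refine h.trans ((hF.reachable_of_crossingParity_eq he he₀ ?_).trans h₀)
      rw [← crossingParity_eq_of_reachable h, crossingParity_eq_of_reachable h₀, hc.2, htop.2]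
  exact regionConnected_parityRegion ⟨_, htop⟩ fun c hc c' hc' =>
    (hreach hc).trans (hreach hc').symm

theorem origin_mem_parityRegion_zero : ((0 : ℤ), (0 : ℤ)) ∈ parityRegion L F 0 := by
  have := hF.one_le
  exact ⟨⟨le_rfl, by omega, le_rfl, by omega⟩, crossingParity_eq_zero_of_nonpos le_rfl 0⟩

end IsInnerCycle

def shiftHom (M : ℕ) : boxGraph M →g latticeGraph where
  toFun p := p + (1, 1)
  map_rel' h := by
    obtain ⟨k, hk⟩ := latticeGraph_adj_iff.mp h.1
    exact latticeGraph_adj_iff.mpr ⟨k, by rw [hk, add_right_comm]⟩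

theorem mem_vtxBox_of_mem_support {M : ℕ} {v v' u : ℤ × ℤ} {w : (boxGraph M).Walk v v'}
    (hw : ¬w.Nil) (hu : u ∈ w.support) : u ∈ vtxBox M := by
  obtain ⟨e, he, hue⟩ := (Walk.mem_support_iff_exists_mem_edges_of_not_nil hw).mp hu
  have hadj := w.edges_subset_edgeSet he
  induction e using Sym2.ind with | h a b =>
  rcases Sym2.mem_iff.mp hue with rfl | rfl
  · exact hadj.2.1
  · exact hadj.2.2

def shiftEdges (s : Set (Sym2 (ℤ × ℤ))) : Set (Sym2 (ℤ × ℤ)) :=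
  Sym2.map (· + (1, 1)) '' s

theorem shiftEdges_injective : Function.Injective shiftEdges :=
  Set.image_injective.mpr (Sym2.map.injective (add_left_injective _))

theorem isInnerCycle_shiftEdges (hL : 2 ≤ L) {s : Set (Sym2 (ℤ × ℤ))}
    (hs : ∃ (v : ℤ × ℤ) (w : (boxGraph (L - 2)).Walk v v), w.IsCycle ∧ {e | e ∈ w.edges} = s) :
    IsInnerCycle L (shiftEdges s) := by
  obtain ⟨v, w, hw, rfl⟩ := hs
  have hinj : Function.Injective (shiftHom (L - 2)) := add_left_injective _
  refine ⟨_, w.map (shiftHom (L - 2)), (Walk.isCycle_map_iff_of_injective hinj).mpr hw, ?_, ?_⟩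
  · intro u hu
    rw [Walk.support_map, List.mem_map] at hu
    obtain ⟨u, hu, rfl⟩ := hu
    obtain ⟨h₁, h₂, h₃, h₄⟩ := mem_vtxBox_of_mem_support hw.not_nil hu
    simp only [innerVtx, shiftHom, RelHom.coeFn_mk, Set.mem_ofPred_eq, Prod.fst_add,
      Prod.snd_add]
    omega
  · ext e
    simp [Walk.edges_map, shiftHom, shiftEdges]

abbrev OrderedPartition (L : ℕ) : Type :=
  {p : Set (ℤ × ℤ) × Set (ℤ × ℤ) //
    p.1.Nonempty ∧ p.2.Nonempty ∧ regionConnected p.1 ∧ regionConnected p.2 ∧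
    Disjoint p.1 p.2 ∧ p.1 ∪ p.2 = cellBox L}

theorem cellBox_finite : (cellBox L).Finite :=
  ((Set.finite_Ico 0 (L : ℤ)).prod (Set.finite_Ico 0 (L : ℤ))).subset
    fun _ ⟨h₁, h₂, h₃, h₄⟩ => ⟨⟨h₁, h₂⟩, h₃, h₄⟩

instance : Finite (OrderedPartition L) := by
  let S : Set (Set (ℤ × ℤ) × Set (ℤ × ℤ)) := {t | t ⊆ cellBox L} ×ˢ {t | t ⊆ cellBox L}
  have : Finite S := (cellBox_finite.finite_subsets.prod cellBox_finite.finite_subsets).to_subtype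
  have hS (p : OrderedPartition L) : p.1 ∈ S := by
    obtain ⟨⟨A, B⟩, -, -, -, -, -, hAB⟩ := p
    exact ⟨fun x hx => hAB ▸ Or.inl hx, fun x hx => hAB ▸ Or.inr hx⟩
  exact Finite.of_injective (fun p => (⟨p.1, hS p⟩ : S))
    fun p q h => Subtype.ext (congrArg Subtype.val h :)

theorem two_mul_card_le_numOrderedPartitions {α : Type*} (I : α → Set (ℤ × ℤ))
    (hI : Function.Injective I) (hsub : ∀ a, I a ⊆ cellBox L) (hconn : ∀ a, regionConnected (I a))
    (hconn' : ∀ a, regionConnected (cellBox L \ I a)) {c₀ : ℤ × ℤ}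
    (hc₀ : ∀ a, c₀ ∈ cellBox L \ I a) : 2 * Nat.card α ≤ numOrderedPartitions L := by
  have hne (a : α) : (I a).Nonempty := Set.nonempty_coe_sort.mp (hconn a).nonempty
  let f : α ⊕ α → OrderedPartition L := Sum.elim
    (fun a => ⟨(I a, cellBox L \ I a), hne a, ⟨c₀, hc₀ a⟩, hconn a, hconn' a,
      Set.disjoint_sdiff_right, Set.union_sdiff_cancel (hsub a)⟩)
    (fun a => ⟨(cellBox L \ I a, I a), ⟨c₀, hc₀ a⟩, hne a, hconn' a, hconn a,
      Set.disjoint_sdiff_left, Set.sdiff_union_of_subset (hsub a)⟩)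
  have hf : Function.Injective f := by
    rintro (a | a) (b | b) h <;> replace h := congrArg Subtype.val h <;>
      simp only [f, Sum.elim_inl, Sum.elim_inr, Prod.mk.injEq] at h
    · rw [hI h.1]
    · exact absurd (h.1 ▸ hc₀ b) (hc₀ a).2
    · exact absurd (h.1 ▸ hc₀ a) (hc₀ b).2
    · rw [hI h.2]
  have : Finite α := Finite.of_injective _ (hf.comp Sum.inl_injective)
  calc 2 * Nat.card α = Nat.card (α ⊕ α) := by rw [Nat.card_sum]; ring
    _ ≤ Nat.card (OrderedPartition L) := Nat.card_le_card_of_injective f hf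

end GridPolygon

open GridPolygon

/-- Every self-avoiding polygon fitting inside an `(L-2) × (L-2)` square
of cells (i.e. a cycle in the grid graph on `{0,…,L-2}²`), surrounded by a border of empty
cells of width one, yields a partition of the `L × L` grid into two connected regions;
hence `P_{L-2}(1) ≤ G_L(1)/2`, i.e. `2·P_{L-2}(1)` is at most the number of ordered
partitions of the `L × L` grid into two connected regions. -/
theorem polygons_le_half_partitions (L : ℕ) (hL : 3 ≤ L) :
    2 * numCycles (L - 2) ≤ numOrderedPartitions L := by
  have hcyc (s : {s : Set (Sym2 (ℤ × ℤ)) // ∃ (v : ℤ × ℤ) (w : (boxGraph (L - 2)).Walk v v),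
      w.IsCycle ∧ {e | e ∈ w.edges} = s}) : IsInnerCycle L (shiftEdges s) :=
    isInnerCycle_shiftEdges (by omega) s.2
  refine two_mul_card_le_numOrderedPartitions (fun s => parityRegion L (shiftEdges s) 1)
    (c₀ := (0, 0)) (fun s s' h => ?_) (fun _ _ hc => hc.1)
    (fun s => (hcyc s).regionConnected_parityRegion_one) (fun s => ?_) (fun s => ?_)
  · exact Subtype.ext <| shiftEdges_injective <|
      (hcyc s).isInnerTwoRegular.eq_of_parityRegion_one_eq (hcyc s').isInnerTwoRegular h
  · rw [cellBox_diff_parityRegion_one]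
    exact (hcyc s).regionConnected_parityRegion_zero
  · rw [cellBox_diff_parityRegion_one]
    exact (hcyc s).origin_mem_parityRegion_zero
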